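/- Suppose a state's votes in a given election are split into two districts of equal size, i.e. district i receives dᵢ Democratic votes and rᵢ Republican votes (all positive reals) with d₁ + r₁ = d₂ + r₂, and suppose each party wins exactly one district, say d₁ > r₁ and r₂ > d₂. Then the efficiency gap of the plan equals (R − D)/(R + D), where D = d₁ + d₂ and R = r₁ + r₂ are the statewide party totals. In particular, the efficiency gap depends only on the statewide totals and not on the particular division into districts, and it equals 0 if and only if the statewide vote is tied (D = R). -/

import Mathlib

/-- Democratic wasted votes in a district with `d` Democratic and `r` Republican votes:
the losing party wastes all of its votes, the winning party wastes its votes in excess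
of half the district's total. -/
noncomputable def wastedDem (d r : ℝ) : ℝ := if d > r then d - (d + r) / 2 else d

/-- Republican wasted votes in a district with `d` Democratic and `r` Republican votes. -/
noncomputable def wastedRep (d r : ℝ) : ℝ := if r > d then r - (d + r) / 2 else r

/-- The efficiency gap of a two-district plan:
(total wasted Republican votes − total wasted Democratic votes) / (total votes). -/
noncomputable def effGap (d₁ r₁ d₂ r₂ : ℝ) : ℝ :=
  ((wastedRep d₁ r₁ + wastedRep d₂ r₂) - (wastedDem d₁ r₁ + wastedDem d₂ r₂)) /
    (d₁ + d₂ + r₁ + r₂)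

/-!
The winner of a district wastes half its margin and the loser all its votes, so the net
Republican waste is `r₁ − d₂ + ((r₂ − d₂) − (d₁ − r₁)) / 2`. When `d₁ + r₁ = d₂ + r₂`, both
this and `R − D` equal `2 (r₁ − d₂)`, so the efficiency gap is `(R − D) / (R + D)`, a function
of the statewide totals alone, which vanishes exactly when `D = R` since `R + D > 0`.
-/

section WastedVotes

variable {d r : ℝ}

lemma wastedDem_of_lt (h : r < d) : wastedDem d r = (d - r) / 2 := by
  rw [wastedDem, if_pos h]
  ring

lemma wastedDem_of_le (h : d ≤ r) : wastedDem d r = d :=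
  if_neg h.not_gt

lemma wastedRep_of_lt (h : d < r) : wastedRep d r = (r - d) / 2 := by
  rw [wastedRep, if_pos h]
  ring

lemma wastedRep_of_le (h : r ≤ d) : wastedRep d r = r :=
  if_neg h.not_gt

end WastedVotes

lemma effGap_of_split_seats {d₁ r₁ d₂ r₂ : ℝ} (hsize : d₁ + r₁ = d₂ + r₂)
    (hw₁ : r₁ < d₁) (hw₂ : d₂ < r₂) :
    effGap d₁ r₁ d₂ r₂ = ((r₁ + r₂) - (d₁ + d₂)) / ((r₁ + r₂) + (d₁ + d₂)) := by
  rw [effGap, wastedRep_of_le hw₁.le, wastedRep_of_lt hw₂, wastedDem_of_lt hw₁,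
    wastedDem_of_le hw₂.le]
  congr 1 <;> linarith

lemma sub_div_add_eq_zero_iff {R D : ℝ} (hpos : 0 < R + D) : (R - D) / (R + D) = 0 ↔ D = R := by
  rw [div_eq_zero_iff, or_iff_left hpos.ne', sub_eq_zero, eq_comm]

theorem effGap_split_seats_general (d₁ r₁ d₂ r₂ : ℝ)
    (hr₁ : 0 < r₁)
    (hsize : d₁ + r₁ = d₂ + r₂) (hw₁ : d₁ > r₁) (hw₂ : r₂ > d₂) :
    effGap d₁ r₁ d₂ r₂ = ((r₁ + r₂) - (d₁ + d₂)) / ((r₁ + r₂) + (d₁ + d₂)) ∧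
      (∀ d₁' r₁' d₂' r₂' : ℝ, 0 < d₁' → 0 < r₁' → 0 < d₂' → 0 < r₂' →
        d₁' + r₁' = d₂' + r₂' → d₁' > r₁' → r₂' > d₂' →
        d₁' + d₂' = d₁ + d₂ → r₁' + r₂' = r₁ + r₂ →
        effGap d₁' r₁' d₂' r₂' = effGap d₁ r₁ d₂ r₂) ∧
      (effGap d₁ r₁ d₂ r₂ = 0 ↔ d₁ + d₂ = r₁ + r₂) := by
  have hgap := effGap_of_split_seats hsize hw₁ hw₂
  have htotal : 0 < (r₁ + r₂) + (d₁ + d₂) := by linarith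
  refine ⟨hgap, ?_, ?_⟩
  · intro d₁' r₁' d₂' r₂' _ _ _ _ hsize' hw₁' hw₂' hD hR
    rw [effGap_of_split_seats hsize' hw₁' hw₂', hgap, hD, hR]
  · rw [hgap, sub_div_add_eq_zero_iff htotal]

/-- In a two-district plan with equal-size districts
(`d₁ + r₁ = d₂ + r₂`) in which each party wins exactly one district
(`d₁ > r₁` and `r₂ > d₂`), the efficiency gap equals `(R − D)/(R + D)`, where
`D = d₁ + d₂` and `R = r₁ + r₂` are the statewide totals.  In particular it depends
only on the statewide totals and not on the particular division into districts, and it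
equals `0` if and only if the statewide vote is tied (`D = R`). -/
theorem effGap_split_seats (d₁ r₁ d₂ r₂ : ℝ)
    (hd₁ : 0 < d₁) (hr₁ : 0 < r₁) (hd₂ : 0 < d₂) (hr₂ : 0 < r₂)
    (hsize : d₁ + r₁ = d₂ + r₂) (hw₁ : d₁ > r₁) (hw₂ : r₂ > d₂) :
    effGap d₁ r₁ d₂ r₂ = ((r₁ + r₂) - (d₁ + d₂)) / ((r₁ + r₂) + (d₁ + d₂)) ∧
      (∀ d₁' r₁' d₂' r₂' : ℝ, 0 < d₁' → 0 < r₁' → 0 < d₂' → 0 < r₂' →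
        d₁' + r₁' = d₂' + r₂' → d₁' > r₁' → r₂' > d₂' →
        d₁' + d₂' = d₁ + d₂ → r₁' + r₂' = r₁ + r₂ →
        effGap d₁' r₁' d₂' r₂' = effGap d₁ r₁ d₂ r₂) ∧
      (effGap d₁ r₁ d₂ r₂ = 0 ↔ d₁ + d₂ = r₁ + r₂) :=
  effGap_split_seats_general d₁ r₁ d₂ r₂ hr₁ hsize hw₁ hw₂
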